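/- Let p be an odd prime with Pisano period l_p = p−1 and β(p) = 4, and let C = ⟨f(x)⟩ be the cyclic code of length p−1 over F_p generated by the Fibonacci polynomial f(x). Then the weight distribution of C is: A_0 = 1, A_{p−5} = (p−1)²/4, A_{p−1} = (p−1)(3p+5)/4, and A_w = 0 for all other weights w, where A_w denotes the number of codewords of C of Hamming weight w. -/

import Mathlib

open Polynomial

/-- The Fibonacci sequence over `ZMod p`: `F 0 = 0`, `F 1 = 1`, `F (n+2) = F (n+1) + F n`. -/
def fibMod (p : ℕ) : ℕ → ZMod p
  | 0 => 0
  | 1 => 1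
  | n + 2 => fibMod p (n + 1) + fibMod p n

/-- The Pisano period of `p`: the least `t > 0` with `F t = F 0 = 0` and `F (t+1) = F 1 = 1`. -/
noncomputable def pisano (p : ℕ) : ℕ :=
  sInf {t : ℕ | 0 < t ∧ fibMod p t = 0 ∧ fibMod p (t + 1) = 1}

/-- `β(p)`: the number of indices `0 ≤ i < l_p` with `F i = 0` in `ZMod p`. -/
noncomputable def betaP (p : ℕ) : ℕ :=
  ((Finset.range (pisano p)).filter fun i => fibMod p i = 0).card

/-- The Fibonacci polynomial `f(x) = ∑_{i=0}^{l_p - 1} F_i x^i` over `ZMod p`. -/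
noncomputable def fibPoly (p : ℕ) : (ZMod p)[X] :=
  ∑ i ∈ Finset.range (pisano p), C (fibMod p i) * X ^ i

/-- Cyclic shift of a vector of length `l`: the shift `v ↦ (v_{l-1}, v_0, …, v_{l-2})`,
which corresponds to multiplication by `x` modulo `x^l - 1` on coefficient vectors. -/
def cyclicShift (p l : ℕ) (v : Fin l → ZMod p) : Fin l → ZMod p :=
  fun i => v ⟨((i : ℕ) + (l - 1)) % l, Nat.mod_lt _ i.pos⟩

/-- The coefficient vector of length `l` of a polynomial. -/
def polyVec (p l : ℕ) (g : (ZMod p)[X]) : Fin l → ZMod p := fun i => g.coeff i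

/-- The cyclic code of length `l` generated by `g`: the ideal generated by the image of `g`
in `F_p[x]/(x^l - 1)`, identified with the subspace of `F_p^l` of coefficient vectors via
`a_0 + a_1 x + ⋯ + a_{l-1} x^{l-1} ↦ (a_0, …, a_{l-1})`; equivalently (since multiplication
by `x` is the cyclic shift), the `F_p`-span of all cyclic shifts of the coefficient vector
of `g`. -/
noncomputable def cyclicCode (p l : ℕ) (g : (ZMod p)[X]) :
    Submodule (ZMod p) (Fin l → ZMod p) :=
  Submodule.span (ZMod p) {w | ∃ k : ℕ, w = (cyclicShift p l)^[k] (polyVec p l g)}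

/-- The cyclic code of length `l` generated by the Fibonacci polynomial `f(x)`. -/
noncomputable def fibCode (p l : ℕ) : Submodule (ZMod p) (Fin l → ZMod p) :=
  cyclicCode p l (fibPoly p)

/-!
Since `l_p = p - 1` we have `F_{p-1} = 0` and `F_p = 1`, so every root `a` of `x² = x + 1` in a
commutative `𝔽_p`-algebra satisfies `a^{p-1} = 1`. For the root of `x² - x - 1` in
`𝔽_p[x]/(x² - x - 1)` this says `a^p = a`, which forces `x² - x - 1` to have roots
`α ≠ β = 1 - α` in `𝔽_p` (distinct because `p ≠ 5`).

Each root `a` satisfies `a^i = a F_i + F_{i-1}` (indices mod `l_p`), i.e. the geometric word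
`(a^i)_i` is `a f + shift f` and lies in `C`. Subtracting the two identities puts `f` in the span
of `(α^i)_i` and `(β^i)_i`, which is stable under the cyclic shift. Hence
`C = {(u α^i + v β^i)_i}`, and `(u, v)` is determined by the codeword.

For `u ≠ 0` the zeros of this word are the `i` with `γ^i = -v/u`, where `γ = α/β`: there are
`(p-1)/ord γ` of them if `-v/u` is a power of `γ` and none otherwise. By Binet's formula
`F_i = 0 ↔ γ^i = 1`, so `(p-1)/ord γ = β(p) = 4`, and counting pairs `(u, v)` gives the
distribution.
-/

open Finset

theorem card_filter_range_mul_modEq {d : ℕ} (hd : 0 < d) (m j : ℕ) :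
    #{i ∈ range (m * d) | i ≡ j [MOD d]} = m := by
  suffices {i ∈ range (m * d) | i ≡ j [MOD d]} = (range m).image (· * d + j % d) by
    rw [this, card_image_of_injective _ fun a b h ↦ by simpa [hd.ne'] using h, card_range]
  refine Finset.ext fun i ↦ ?_
  rw [mem_filter, mem_image]
  simp only [mem_range, Nat.ModEq]
  constructor
  · rintro ⟨hi, hij⟩
    exact ⟨i / d, (Nat.div_lt_iff_lt_mul hd).mpr hi, hij ▸ Nat.div_add_mod' i d⟩
  · rintro ⟨k, hk, rfl⟩
    refine ⟨?_, by rw [Nat.mul_comm, Nat.mul_add_mod, Nat.mod_mod]⟩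
    nlinarith [Nat.mod_lt j hd]

theorem card_filter_range_pow_eq_pow {M : Type*} [Monoid M] [DecidableEq M] {γ : M} {n : ℕ}
    (hn : 0 < n) (hγ : γ ^ n = 1) (j : ℕ) :
    #{i ∈ range n | γ ^ i = γ ^ j} = n / orderOf γ := by
  have hfin : IsOfFinOrder γ := isOfFinOrder_iff_pow_eq_one.mpr ⟨n, hn, hγ⟩
  obtain ⟨m, rfl⟩ := orderOf_dvd_of_pow_eq_one hγ
  simp_rw [hfin.pow_eq_pow_iff_modEq]
  rw [mul_comm, card_filter_range_mul_modEq hfin.orderOf_pos,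
    Nat.mul_div_cancel _ hfin.orderOf_pos]

theorem card_image_range_orderOf {M : Type*} [Monoid M] [DecidableEq M] (γ : M) :
    #((range (orderOf γ)).image (γ ^ ·)) = orderOf γ := by
  rw [card_image_of_injOn (by simpa using pow_injOn_Iio_orderOf), card_range]

theorem Fin.card_filter_val {n : ℕ} (P : ℕ → Prop) [DecidablePred P] :
    #{i : Fin n | P i} = #{i ∈ range n | P i} := by
  simp only [card_filter]
  exact Fin.sum_univ_eq_sum_range (fun i ↦ if P i then 1 else 0) n

theorem hammingNorm_eq_sub_card_filter_eq_zero {K : Type*} [Zero K] [DecidableEq K] {n : ℕ}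
    (x : Fin n → K) : hammingNorm x = n - #{i | x i = 0} := by
  have := card_filter_add_card_filter_not (s := univ) (fun i ↦ x i = 0)
  rw [card_univ, Fintype.card_fin] at this
  exact Nat.eq_sub_of_add_eq' this

theorem ncard_setOf_mem_and_hammingNorm_eq_zero {R M ι : Type*} [Semiring R] [AddCommMonoid M]
    [Module R M] [DecidableEq M] [Fintype ι] (C : Submodule R (ι → M)) :
    {v | v ∈ C ∧ hammingNorm v = 0}.ncard = 1 := by
  rw [← Set.ncard_singleton (0 : ι → M)]
  congr 1
  ext v
  simp only [Set.mem_ofPred_eq, hammingNorm_eq_zero, Set.mem_singleton_iff, and_iff_right_iff_imp]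
  rintro rfl
  exact zero_mem C

theorem ncard_setOf_mem_range_and {X Y : Type*} [Fintype X] {E : X → Y}
    (hE : Function.Injective E) (P : Y → Prop) [DecidablePred P] :
    {y | y ∈ Set.range E ∧ P y}.ncard = #{x | P (E x)} := by
  have hset : {y | y ∈ Set.range E ∧ P y} = E '' {x | P (E x)} := by
    ext y
    constructor
    · rintro ⟨⟨x, rfl⟩, hx⟩
      exact ⟨x, hx, rfl⟩
    · rintro ⟨x, hx, rfl⟩
      exact ⟨⟨x, rfl⟩, hx⟩
  rw [hset, Set.ncard_image_of_injective _ hE, ← Set.ncard_coe_finset, coe_filter]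
  simp

theorem exists_isRoot_of_aeval_eq_zero_of_pow_card {K A : Type*} [Field K] [Fintype K]
    [CommRing A] [Nontrivial A] [Algebra K A] {f : K[X]} {a : A} (hf : aeval a f = 0)
    (ha : a ^ Fintype.card K = a) : ∃ c, f.IsRoot c := by
  classical
  set q := Fintype.card K
  set g := EuclideanDomain.gcd f (X ^ q - X) with hg_def
  have hg : aeval a g = 0 := by
    rw [hg_def, EuclideanDomain.gcd_eq_gcd_ab]
    simp [hf, ha]
  have hdeg : g.degree ≠ 0 := fun h ↦ by
    have hC := eq_C_of_degree_eq_zero h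
    rw [hC, aeval_C, map_eq_zero_iff _ (algebraMap K A).injective] at hg
    rw [hC, hg, C_0, degree_zero] at h
    exact WithBot.bot_ne_zero h
  have hsplits : Splits (X ^ q - X : K[X]) := by
    rw [splits_iff_card_roots, FiniteField.roots_X_pow_card_sub_X,
      FiniteField.X_pow_card_sub_X_natDegree_eq K Fintype.one_lt_card]
    rfl
  obtain ⟨c, hc⟩ := (hsplits.of_dvd (FiniteField.X_pow_card_sub_X_ne_zero K Fintype.one_lt_card)
    (EuclideanDomain.gcd_dvd_right _ _)).exists_eval_eq_zero hdeg
  exact ⟨c, IsRoot.dvd hc (EuclideanDomain.gcd_dvd_left f _)⟩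

def geomVec {K : Type*} [Monoid K] (n : ℕ) (a : K) : Fin n → K := fun i ↦ a ^ (i : ℕ)

section TwoGeometricCode

variable {K : Type*} [Field K] {n : ℕ} {α β : K}

def geomComb (n : ℕ) (α β : K) (x : K × K) : Fin n → K := x.1 • geomVec n α + x.2 • geomVec n β

theorem range_geomComb :
    Set.range (geomComb n α β) = Submodule.span K {geomVec n α, geomVec n β} := by
  ext w
  simp [Submodule.mem_span_pair, geomComb]

theorem geomComb_injective (hn : 2 ≤ n) (hαβ : α ≠ β) : Function.Injective (geomComb n α β) := by
  rintro ⟨u, v⟩ ⟨u', v'⟩ h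
  have h0 := congrFun h ⟨0, by omega⟩
  have h1 := congrFun h ⟨1, by omega⟩
  simp only [geomComb, geomVec, Pi.add_apply, Pi.smul_apply, smul_eq_mul, pow_zero, pow_one,
    mul_one] at h0 h1
  have hu : u = u' := by
    have : (u - u') * (α - β) = 0 := by linear_combination h1 - β * h0
    simpa [sub_eq_zero, hαβ] using this
  exact Prod.ext hu (by linear_combination h0 - hu)

theorem geomComb_apply_eq_zero_iff (hβ : β ≠ 0) {u : K} (hu : u ≠ 0) (v : K) (i : Fin n) :
    geomComb n α β (u, v) i = 0 ↔ (α / β) ^ (i : ℕ) = -(v / u) := by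
  have hβi : β ^ (i : ℕ) ≠ 0 := pow_ne_zero _ hβ
  simp only [geomComb, geomVec, Pi.add_apply, Pi.smul_apply, smul_eq_mul, div_pow]
  rw [div_eq_iff hβi, ← sub_eq_zero, ← mul_right_inj' hu]
  constructor <;> intro h <;> field_simp at h ⊢ <;> linear_combination h

theorem div_orderOf_div_mem_Ioo (hn : 0 < n) (hα : α ^ n = 1) (hβ : β ^ n = 1) (hαβ : α ≠ β) :
    n / orderOf (α / β) ∈ Set.Ioo 0 n := by
  have hβ0 : β ≠ 0 := by rintro rfl; simp [zero_pow hn.ne'] at hβ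
  have hdvd : orderOf (α / β) ∣ n := orderOf_dvd_of_pow_eq_one (by rw [div_pow, hα, hβ, div_one])
  have hd1 : orderOf (α / β) ≠ 1 := by
    rwa [Ne, orderOf_eq_one_iff, div_eq_one_iff_eq hβ0]
  have hd0 : 0 < orderOf (α / β) := Nat.pos_of_dvd_of_pos hdvd hn
  exact ⟨Nat.div_pos (Nat.le_of_dvd hn hdvd) hd0, Nat.div_lt_self hn (by omega)⟩

variable [DecidableEq K]

theorem hammingNorm_geomComb (hn : 0 < n) (hα : α ^ n = 1) (hβ : β ^ n = 1) (x : K × K) :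
    hammingNorm (geomComb n α β x) =
      if x = 0 then 0
      else if x.1 ≠ 0 ∧ -(x.2 / x.1) ∈ (range (orderOf (α / β))).image ((α / β) ^ ·)
      then n - n / orderOf (α / β) else n := by
  have hβ0 : β ≠ 0 := by rintro rfl; simp [zero_pow hn.ne'] at hβ
  have hγ : (α / β) ^ n = 1 := by rw [div_pow, hα, hβ, div_one]
  obtain ⟨u, v⟩ := x
  split_ifs with hx h
  · obtain ⟨rfl, rfl⟩ := Prod.mk_eq_zero.mp hx
    simp [geomComb]
  all_goals rw [hammingNorm_eq_sub_card_filter_eq_zero]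
  · simp_rw [geomComb_apply_eq_zero_iff hβ0 h.1, Fin.card_filter_val fun i ↦ (α / β) ^ i = -(v / u)]
    obtain ⟨j, -, hj⟩ := mem_image.mp h.2
    rw [← hj, card_filter_range_pow_eq_pow hn hγ]
  by_cases hu : u = 0
  · subst hu
    have hv : v ≠ 0 := by simpa using hx
    rw [filter_false_of_mem fun i _ ↦ by simp [geomComb, geomVec, hv, hβ0], card_empty,
      Nat.sub_zero]
  have hfin : IsOfFinOrder (α / β) := isOfFinOrder_iff_pow_eq_one.mpr ⟨n, hn, hγ⟩
  simp_rw [geomComb_apply_eq_zero_iff hβ0 hu, Fin.card_filter_val fun i ↦ (α / β) ^ i = -(v / u)]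
  rw [card_eq_zero.mpr (filter_eq_empty_iff.mpr fun i _ hi ↦ h ⟨hu, ?_⟩), Nat.sub_zero]
  rw [← hi]
  exact hfin.mem_powers_iff_mem_range_orderOf.mp ⟨i, rfl⟩

variable [Fintype K]

theorem card_filter_ne_zero_neg_div_mem (S : Finset K) :
    #{x : K × K | x.1 ≠ 0 ∧ -(x.2 / x.1) ∈ S} = (Fintype.card K - 1) * #S := by
  rw [← card_univ, ← card_erase_of_mem (mem_univ 0), ← filter_ne', ← card_product]
  have hcancel {u : K} (hu : u ≠ 0) (t : K) : -(-(t * u) / u) = t := by field_simp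
  refine card_nbij' (fun x ↦ (x.1, -(x.2 / x.1))) (fun y ↦ (y.1, -(y.2 * y.1))) ?_ ?_ ?_ ?_ <;>
    rintro ⟨u, v⟩ h <;> simp_all

theorem card_filter_hammingNorm_geomComb_eq_sub (hn : 0 < n) (hα : α ^ n = 1) (hβ : β ^ n = 1)
    (hαβ : α ≠ β) :
    #{x : K × K | hammingNorm (geomComb n α β x) = n - n / orderOf (α / β)}
      = (Fintype.card K - 1) * orderOf (α / β) := by
  obtain ⟨hk0, hkn⟩ := div_orderOf_div_mem_Ioo hn hα hβ hαβ
  have hiff (x : K × K) : hammingNorm (geomComb n α β x) = n - n / orderOf (α / β) ↔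
      x.1 ≠ 0 ∧ -(x.2 / x.1) ∈ (range (orderOf (α / β))).image ((α / β) ^ ·) := by
    rw [hammingNorm_geomComb hn hα hβ]
    split_ifs with hx h
    · simp only [hx, Prod.fst_zero, ne_eq, not_true_eq_false, false_and, iff_false]
      omega
    · exact iff_of_true rfl h
    · exact iff_of_false (by omega) h
  rw [filter_congr fun x _ ↦ hiff x, card_filter_ne_zero_neg_div_mem, card_image_range_orderOf]

theorem card_filter_hammingNorm_geomComb_eq_self (hn : 0 < n) (hα : α ^ n = 1) (hβ : β ^ n = 1)
    (hαβ : α ≠ β) :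
    #{x : K × K | hammingNorm (geomComb n α β x) = n}
      = Fintype.card K ^ 2 - (Fintype.card K - 1) * orderOf (α / β) - 1 := by
  obtain ⟨hk0, hkn⟩ := div_orderOf_div_mem_Ioo hn hα hβ hαβ
  have hsplit := card_filter_add_card_filter_not (s := univ)
    fun x : K × K ↦ x.1 ≠ 0 ∧ -(x.2 / x.1) ∈ (range (orderOf (α / β))).image ((α / β) ^ ·)
  rw [card_filter_ne_zero_neg_div_mem, card_image_range_orderOf, card_univ, Fintype.card_prod,
    ← sq] at hsplit
  rw [← Nat.eq_sub_of_add_eq' hsplit, ← card_erase_of_mem (s := filter _ univ) (a := 0) (by simp)]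
  refine congrArg card (Finset.ext fun x ↦ ?_)
  rw [mem_erase, mem_filter, mem_filter, hammingNorm_geomComb hn hα hβ]
  simp only [mem_univ, true_and]
  split_ifs with hx h
  · simp only [hx, ne_eq, not_true_eq_false, false_and, iff_false]
    omega
  · exact iff_of_false (by omega) fun h' ↦ h'.2 h
  · exact iff_of_true rfl ⟨hx, h⟩

theorem card_filter_hammingNorm_geomComb_of_ne (hn : 0 < n) (hα : α ^ n = 1) (hβ : β ^ n = 1)
    {w : ℕ} (h0 : w ≠ 0) (hsub : w ≠ n - n / orderOf (α / β)) (hself : w ≠ n) :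
    #{x : K × K | hammingNorm (geomComb n α β x) = w} = 0 := by
  refine card_eq_zero.mpr (filter_eq_empty_iff.mpr fun x _ ↦ ?_)
  rw [hammingNorm_geomComb hn hα hβ]
  split_ifs <;> omega

end TwoGeometricCode

section Fibonacci

variable {p : ℕ}

theorem pow_succ_eq_fibMod {A : Type*} [CommRing A] [Algebra (ZMod p) A] {a : A}
    (ha : a ^ 2 = a + 1) : ∀ m : ℕ,
    a ^ (m + 1) = algebraMap (ZMod p) A (fibMod p (m + 1)) * a + algebraMap (ZMod p) A (fibMod p m)
  | 0 => by simp [fibMod]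
  | m + 1 => by
    have hfib : fibMod p (m + 1 + 1) = fibMod p (m + 1) + fibMod p m := rfl
    rw [pow_succ, pow_succ_eq_fibMod ha m, hfib, map_add]
    linear_combination algebraMap (ZMod p) A (fibMod p (m + 1)) * ha

theorem pow_eq_one_of_fibMod {A : Type*} [CommRing A] [Algebra (ZMod p) A] {a : A}
    (ha : a ^ 2 = a + 1) {n : ℕ} (h0 : fibMod p n = 0) (h1 : fibMod p (n + 1) = 1) :
    a ^ n = 1 := by
  have hunit : IsUnit a := IsUnit.of_mul_eq_one (a - 1) (by linear_combination ha)
  refine hunit.mul_left_cancel ?_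
  rw [← pow_succ', pow_succ_eq_fibMod (p := p) ha n, h0, h1]
  simp

theorem fibMod_mul_sub {α β : ZMod p} (hα : α ^ 2 = α + 1) (hβ : β ^ 2 = β + 1) :
    ∀ m : ℕ, fibMod p m * (α - β) = α ^ m - β ^ m
  | 0 => by simp [fibMod]
  | m + 1 => by
    have hα' := pow_succ_eq_fibMod (p := p) hα m
    have hβ' := pow_succ_eq_fibMod (p := p) hβ m
    simp only [Algebra.algebraMap_self, RingHom.id_apply] at hα' hβ'
    linear_combination hβ' - hα'

theorem fibMod_pisano (hp : pisano p ≠ 0) :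
    fibMod p (pisano p) = 0 ∧ fibMod p (pisano p + 1) = 1 :=
  (Nat.sInf_mem (Nat.nonempty_of_pos_sInf (Nat.pos_of_ne_zero hp))).2

variable [Fact p.Prime]

theorem two_le_pisano (hp : pisano p ≠ 0) : 2 ≤ pisano p := by
  obtain ⟨h0, -⟩ := fibMod_pisano hp
  by_contra! h
  rw [show pisano p = 1 by omega] at h0
  exact one_ne_zero h0

theorem exists_sq_eq_add_one_of_fibMod (h0 : fibMod p (p - 1) = 0)
    (h1 : fibMod p (p - 1 + 1) = 1) : ∃ α : ZMod p, α ^ 2 = α + 1 := by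
  set f : (ZMod p)[X] := X ^ 2 - X - 1
  have hdeg : f.degree ≠ 0 := by
    rw [show f.degree = 2 by unfold f; compute_degree!]
    decide
  have := AdjoinRoot.nontrivial f hdeg
  set a := AdjoinRoot.root f
  have hf : aeval a f = 0 := by rw [AdjoinRoot.aeval_eq, AdjoinRoot.mk_self]
  have ha : a ^ 2 = a + 1 := by
    simp only [f, map_sub, map_pow, aeval_X, map_one] at hf
    linear_combination hf
  have hpow : a ^ Fintype.card (ZMod p) = a := by
    rw [ZMod.card, ← pow_sub_one_mul (Fact.out : p.Prime).ne_zero, pow_eq_one_of_fibMod ha h0 h1,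
      one_mul]
  obtain ⟨c, hc⟩ := exists_isRoot_of_aeval_eq_zero_of_pow_card hf hpow
  exact ⟨c, by simpa [f, sub_sub, sub_eq_zero] using hc⟩

theorem ne_one_sub_of_sq_eq_add_one (hp : p ≠ 5) {α : ZMod p} (hα : α ^ 2 = α + 1) :
    α ≠ 1 - α := by
  intro h
  have h5 : ((5 : ℕ) : ZMod p) = 0 := by
    push_cast
    linear_combination (-4 : ZMod p) * hα + (2 * α - 1) * h
  rw [ZMod.natCast_eq_zero_iff, Nat.prime_dvd_prime_iff_eq Fact.out Nat.prime_five] at h5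
  exact hp h5

theorem betaP_eq_div_orderOf {α β : ZMod p} (hα : α ^ 2 = α + 1) (hβ : β ^ 2 = β + 1)
    (hαβ : α ≠ β) (hp : pisano p ≠ 0) : betaP p = pisano p / orderOf (α / β) := by
  obtain ⟨h0, h1⟩ := fibMod_pisano hp
  have hβ0 : β ≠ 0 := by rintro rfl; simp at hβ
  have hγ : (α / β) ^ pisano p = 1 := by
    rw [div_pow, pow_eq_one_of_fibMod hα h0 h1, pow_eq_one_of_fibMod hβ h0 h1, div_one]
  have hzero (i : ℕ) : fibMod p i = 0 ↔ (α / β) ^ i = (α / β) ^ 0 := by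
    rw [pow_zero, div_pow, div_eq_one_iff_eq (pow_ne_zero _ hβ0), ← sub_eq_zero (a := α ^ i),
      ← fibMod_mul_sub hα hβ, mul_eq_zero, or_iff_left (sub_ne_zero.mpr hαβ)]
  rw [betaP, filter_congr fun i _ ↦ hzero i,
    card_filter_range_pow_eq_pow (Nat.pos_of_ne_zero hp) hγ]

end Fibonacci

section FibCode

variable {p l : ℕ}

theorem cyclicShift_add (v w : Fin l → ZMod p) :
    cyclicShift p l (v + w) = cyclicShift p l v + cyclicShift p l w := rfl

theorem cyclicShift_smul (c : ZMod p) (v : Fin l → ZMod p) :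
    cyclicShift p l (c • v) = c • cyclicShift p l v := rfl

theorem cyclicShift_geomVec {a : ZMod p} (ha : a ^ l = 1) :
    cyclicShift p l (geomVec l a) = a ^ (l - 1) • geomVec l a := by
  funext i
  have hmod (m : ℕ) : a ^ (m % l) = a ^ m := by
    conv_rhs => rw [← Nat.mod_add_div m l, pow_add, pow_mul, ha, one_pow, mul_one]
  simp only [cyclicShift, geomVec, Pi.smul_apply, smul_eq_mul, hmod, pow_add, mul_comm]

theorem cyclicShift_mem_span_geomVec {α β : ZMod p} (hα : α ^ l = 1) (hβ : β ^ l = 1)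
    {w : Fin l → ZMod p} (hw : w ∈ Submodule.span (ZMod p) {geomVec l α, geomVec l β}) :
    cyclicShift p l w ∈ Submodule.span (ZMod p) {geomVec l α, geomVec l β} := by
  obtain ⟨u, v, rfl⟩ := Submodule.mem_span_pair.mp hw
  rw [cyclicShift_add, cyclicShift_smul, cyclicShift_smul, cyclicShift_geomVec hα,
    cyclicShift_geomVec hβ, smul_smul, smul_smul]
  exact Submodule.mem_span_pair.mpr ⟨_, _, rfl⟩

theorem polyVec_fibPoly (i : Fin (pisano p)) :
    polyVec p (pisano p) (fibPoly p) i = fibMod p i := by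
  simp [polyVec, fibPoly, coeff_C_mul, coeff_X_pow, i.isLt]

theorem geomVec_eq_smul_add_cyclicShift {a : ZMod p} (ha : a ^ 2 = a + 1) (hp : pisano p ≠ 0) :
    geomVec (pisano p) a = a • polyVec p (pisano p) (fibPoly p)
      + cyclicShift p (pisano p) (polyVec p (pisano p) (fibPoly p)) := by
  obtain ⟨h0, h1⟩ := fibMod_pisano hp
  funext ⟨i, hi⟩
  simp only [geomVec, Pi.add_apply, Pi.smul_apply, smul_eq_mul, cyclicShift, polyVec_fibPoly]
  cases i with
  | zero =>
    have hlast : fibMod p (pisano p - 1) = 1 := by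
      obtain ⟨m, hm⟩ := Nat.exists_eq_succ_of_ne_zero hp
      rw [hm] at h0 h1 ⊢
      rwa [show fibMod p (m + 1 + 1) = fibMod p (m + 1) + fibMod p m from rfl, h0, zero_add] at h1
    simp [fibMod, Nat.mod_eq_of_lt (Nat.sub_lt (Nat.pos_of_ne_zero hp) one_pos), hlast]
  | succ j =>
    rw [show j + 1 + (pisano p - 1) = j + pisano p by omega, Nat.add_mod_right,
      Nat.mod_eq_of_lt (by omega), pow_succ_eq_fibMod (p := p) ha j]
    simp [mul_comm]

variable [Fact p.Prime]

theorem fibCode_pisano_eq_span {α β : ZMod p} (hα : α ^ 2 = α + 1) (hβ : β ^ 2 = β + 1)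
    (hαβ : α ≠ β) (hp : pisano p ≠ 0) :
    fibCode p (pisano p) = Submodule.span (ZMod p) {geomVec _ α, geomVec _ β} := by
  obtain ⟨h0, h1⟩ := fibMod_pisano hp
  have hF : polyVec p (pisano p) (fibPoly p) = (α - β)⁻¹ • (geomVec _ α - geomVec _ β) := by
    rw [geomVec_eq_smul_add_cyclicShift hα hp, geomVec_eq_smul_add_cyclicShift hβ hp,
      add_sub_add_right_eq_sub, ← sub_smul, inv_smul_smul₀ (sub_ne_zero.mpr hαβ)]
  have hgeom {a : ZMod p} (ha : a ^ 2 = a + 1) : geomVec _ a ∈ fibCode p (pisano p) := by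
    rw [geomVec_eq_smul_add_cyclicShift ha hp]
    exact add_mem (Submodule.smul_mem _ _ (Submodule.subset_span ⟨0, rfl⟩))
      (Submodule.subset_span ⟨1, rfl⟩)
  refine le_antisymm (Submodule.span_le.mpr ?_) ?_
  · rintro _ ⟨k, rfl⟩
    induction k with
    | zero =>
      rw [Function.iterate_zero_apply, hF]
      exact Submodule.smul_mem _ _ (sub_mem (Submodule.subset_span (by simp))
        (Submodule.subset_span (by simp)))
    | succ k ih =>
      rw [Function.iterate_succ_apply']
      exact cyclicShift_mem_span_geomVec (pow_eq_one_of_fibMod hα h0 h1)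
        (pow_eq_one_of_fibMod hβ h0 h1) ih
  · rw [Submodule.span_le, Set.insert_subset_iff, Set.singleton_subset_iff]
    exact ⟨hgeom hα, hgeom hβ⟩

theorem ncard_fibCode_hammingNorm_eq {α β : ZMod p} (hα : α ^ 2 = α + 1) (hβ : β ^ 2 = β + 1)
    (hαβ : α ≠ β) (hp : pisano p ≠ 0) (w : ℕ) :
    {v | v ∈ fibCode p (pisano p) ∧ hammingNorm v = w}.ncard
      = #{x | hammingNorm (geomComb (pisano p) α β x) = w} := by
  have := ncard_setOf_mem_range_and (geomComb_injective (two_le_pisano hp) hαβ) (hammingNorm · = w)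
  rwa [range_geomComb, ← fibCode_pisano_eq_span hα hβ hαβ hp] at this

theorem exists_fibCode_hammingNorm_eq_geomComb (hl : pisano p = p - 1) :
    ∃ α β : ZMod p, α ≠ β ∧ α ^ (p - 1) = 1 ∧ β ^ (p - 1) = 1 ∧
      betaP p = (p - 1) / orderOf (α / β) ∧
      ∀ w, {v | v ∈ fibCode p (p - 1) ∧ hammingNorm v = w}.ncard
        = #{x | hammingNorm (geomComb (p - 1) α β x) = w} := by
  have hp : pisano p ≠ 0 := by have := (Fact.out : p.Prime).two_le; omega
  obtain ⟨h0, h1⟩ := fibMod_pisano hp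
  rw [hl] at h0 h1
  have hp5 : p ≠ 5 := by rintro rfl; exact absurd h0 (by decide)
  obtain ⟨α, hα⟩ := exists_sq_eq_add_one_of_fibMod h0 h1
  have hβ : (1 - α) ^ 2 = (1 - α) + 1 := by linear_combination hα
  have hαβ := ne_one_sub_of_sq_eq_add_one hp5 hα
  refine ⟨α, 1 - α, hαβ, pow_eq_one_of_fibMod hα h0 h1, pow_eq_one_of_fibMod hβ h0 h1, ?_, ?_⟩
  · rw [← hl, betaP_eq_div_orderOf hα hβ hαβ hp]
  · rw [← hl]
    exact ncard_fibCode_hammingNorm_eq hα hβ hαβ hp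

end FibCode

theorem fibCode_weight_distribution_beta_four_general (p : ℕ) [Fact p.Prime]
    (hl : pisano p = p - 1) (hb : betaP p = 4) :
    Set.ncard {v | v ∈ fibCode p (p - 1) ∧ hammingNorm v = 0} = 1 ∧
      Set.ncard {v | v ∈ fibCode p (p - 1) ∧ hammingNorm v = p - 5} = (p - 1) ^ 2 / 4 ∧
      Set.ncard {v | v ∈ fibCode p (p - 1) ∧ hammingNorm v = p - 1}
        = (p - 1) * (3 * p + 5) / 4 ∧
      ∀ w : ℕ, w ≠ 0 → w ≠ p - 5 → w ≠ p - 1 →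
        Set.ncard {v | v ∈ fibCode p (p - 1) ∧ hammingNorm v = w} = 0 := by
  obtain ⟨α, β, hαβ, hαn, hβn, hbeta, hA⟩ := exists_fibCode_hammingNorm_eq_geomComb hl
  have hn : 0 < p - 1 := Nat.sub_pos_of_lt (Fact.out : p.Prime).one_lt
  have hk : (p - 1) / orderOf (α / β) = 4 := hbeta ▸ hb
  have hd : p - 1 = 4 * orderOf (α / β) := by
    rw [← hk, Nat.div_mul_cancel (orderOf_dvd_of_pow_eq_one (by rw [div_pow, hαn, hβn, div_one]))]
  refine ⟨ncard_setOf_mem_and_hammingNorm_eq_zero _, ?_, ?_, fun w hw0 hw5 hw1 ↦ ?_⟩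
  · rw [hA, show p - 5 = p - 1 - (p - 1) / orderOf (α / β) by omega,
      card_filter_hammingNorm_geomComb_eq_sub hn hαn hβn hαβ, ZMod.card, hd]
    ring_nf
    omega
  · rw [hA, card_filter_hammingNorm_geomComb_eq_self hn hαn hβn hαβ, ZMod.card]
    generalize orderOf (α / β) = d at hd ⊢
    obtain rfl : p = 4 * d + 1 := by omega
    rw [Nat.add_sub_cancel]
    ring_nf
    omega
  · rw [hA]
    exact card_filter_hammingNorm_geomComb_of_ne hn hαn hβn hw0 (by omega) hw1

/-- Weight distribution for `l_p = p - 1`, `β(p) = 4`: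
`A_0 = 1`, `A_{p-5} = (p-1)²/4`, `A_{p-1} = (p-1)(3p+5)/4`, and `A_w = 0` otherwise. -/
theorem fibCode_weight_distribution_beta_four (p : ℕ) [Fact p.Prime] (hodd : Odd p)
    (hl : pisano p = p - 1) (hb : betaP p = 4) :
    Set.ncard {v | v ∈ fibCode p (p - 1) ∧ hammingNorm v = 0} = 1 ∧
      Set.ncard {v | v ∈ fibCode p (p - 1) ∧ hammingNorm v = p - 5} = (p - 1) ^ 2 / 4 ∧
      Set.ncard {v | v ∈ fibCode p (p - 1) ∧ hammingNorm v = p - 1}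
        = (p - 1) * (3 * p + 5) / 4 ∧
      ∀ w : ℕ, w ≠ 0 → w ≠ p - 5 → w ≠ p - 1 →
        Set.ncard {v | v ∈ fibCode p (p - 1) ∧ hammingNorm v = w} = 0 :=
  fibCode_weight_distribution_beta_four_general p hl hb
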